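/- For a continuous path B : [0,∞) → ℝ and any time t, if min_{s≤t} B_s < B_t < max_{s≤t} B_s, then there exists a time t' < t with B_{t'} = B_t and either (min_{s≤t'} B_s = min_{s≤t} B_s and max_{s≤t'} B_s < max_{s≤t} B_s) or (max_{s≤t'} B_s = max_{s≤t} B_s and min_{s≤t'} B_s > min_{s≤t} B_s). -/

import Mathlib

open Set

theorem exists_earlier_time_of_strictly_between_extrema
    (B : ℝ → ℝ) (hB : ContinuousOn B (Ici 0))
    (t : ℝ) (ht : 0 ≤ t)
    (hmin : sInf (B '' Icc 0 t) < B t) (hmax : B t < sSup (B '' Icc 0 t)) :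
    ∃ t' : ℝ, 0 ≤ t' ∧ t' < t ∧ B t' = B t ∧
      ((sInf (B '' Icc 0 t') = sInf (B '' Icc 0 t) ∧
        sSup (B '' Icc 0 t') < sSup (B '' Icc 0 t)) ∨
       (sSup (B '' Icc 0 t') = sSup (B '' Icc 0 t) ∧
        sInf (B '' Icc 0 t') > sInf (B '' Icc 0 t))) := by
  set M := sSup (B '' Icc 0 t) with hM
  set m := sInf (B '' Icc 0 t) with hm
  have hBt : ContinuousOn B (Icc 0 t) := hB.mono Icc_subset_Ici_self
  have hK : IsCompact (B '' Icc 0 t) := isCompact_Icc.image_of_continuousOn hBt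
  have hne : (B '' Icc 0 t).Nonempty := (nonempty_Icc.2 ht).image B
  have hbddA : BddAbove (B '' Icc 0 t) := hK.bddAbove
  have hbddB : BddBelow (B '' Icc 0 t) := hK.bddBelow
  -- set of times attaining max / min
  set SM : Set ℝ := Icc 0 t ∩ B ⁻¹' {M} with hSM
  set Sm : Set ℝ := Icc 0 t ∩ B ⁻¹' {m} with hSm
  have hSMc : IsCompact SM := isCompact_Icc.of_isClosed_subset
    (hBt.preimage_isClosed_of_isClosed isClosed_Icc isClosed_singleton) inter_subset_left
  have hSmc : IsCompact Sm := isCompact_Icc.of_isClosed_subset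
    (hBt.preimage_isClosed_of_isClosed isClosed_Icc isClosed_singleton) inter_subset_left
  obtain ⟨v0, hv0, hv0M⟩ := hK.sSup_mem hne
  obtain ⟨u0, hu0, hu0m⟩ := hK.sInf_mem hne
  have hSMne : SM.Nonempty := ⟨v0, hv0, hv0M⟩
  have hSmne : Sm.Nonempty := ⟨u0, hu0, hu0m⟩
  set v : ℝ := sInf SM with hv
  set u : ℝ := sInf Sm with hu
  have hvmem : v ∈ SM := hSMc.sInf_mem hSMne
  have humem : u ∈ Sm := hSmc.sInf_mem hSmne
  have hBv : B v = M := hvmem.2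
  have hBu : B u = m := humem.2
  have hvle : ∀ s ∈ SM, v ≤ s := fun s hs => csInf_le hSMc.bddBelow hs
  have hule : ∀ s ∈ Sm, u ≤ s := fun s hs => csInf_le hSmc.bddBelow hs
  have hvlt : v < t := lt_of_le_of_ne hvmem.1.2 (fun h => by
    rw [h] at hBv; exact absurd hBv hmax.ne)
  have hult : u < t := lt_of_le_of_ne humem.1.2 (fun h => by
    rw [h] at hBu; exact absurd hBu.symm hmin.ne)
  have huv : u ≠ v := fun h => by
    rw [h, hBv] at hBu
    exact absurd hBu (ne_of_gt (hmin.trans hmax))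
  rcases lt_or_gt_of_ne huv with hlt | hlt
  · -- u < v : min attained first; find t' ∈ [u, v] with B t' = B t
    have hsub : Icc u v ⊆ Icc 0 t := Icc_subset_Icc humem.1.1 hvmem.1.2
    have hiv := intermediate_value_Icc hlt.le (hBt.mono hsub)
    have : B t ∈ Icc (B u) (B v) := by rw [hBu, hBv]; exact ⟨hmin.le, hmax.le⟩
    obtain ⟨t', ht', hBt'⟩ := hiv this
    have ht'v : t' < v := lt_of_le_of_ne ht'.2 (fun h => by
      rw [h, hBv] at hBt'; exact hmax.ne hBt'.symm)
    have ht'0 : 0 ≤ t' := humem.1.1.trans ht'.1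
    have ht't : t' < t := ht'v.trans hvlt
    have hsub' : Icc 0 t' ⊆ Icc 0 t := Icc_subset_Icc le_rfl ht't.le
    have hne' : (B '' Icc 0 t').Nonempty := (nonempty_Icc.2 ht'0).image B
    have hK' : IsCompact (B '' Icc 0 t') :=
      isCompact_Icc.image_of_continuousOn (hBt.mono hsub')
    refine ⟨t', ht'0, ht't, hBt', Or.inl ⟨?_, ?_⟩⟩
    · refine le_antisymm ?_ (csInf_le_csInf hbddB hne' (image_mono (f := B) hsub'))
      exact csInf_le (hbddB.mono (image_mono (f := B) hsub'))
        ⟨u, ⟨humem.1.1, ht'.1⟩, hBu⟩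
    · obtain ⟨s, hs, hsSup⟩ := hK'.sSup_mem hne'
      rw [← hsSup]
      refine lt_of_le_of_ne (le_csSup hbddA (mem_image_of_mem B (hsub' hs))) ?_
      intro h
      exact absurd (hvle s ⟨hsub' hs, h⟩) (not_le.2 (hs.2.trans_lt ht'v))
  · -- v < u : max attained first
    have hsub : Icc v u ⊆ Icc 0 t := Icc_subset_Icc hvmem.1.1 humem.1.2
    have hiv := intermediate_value_Icc' hlt.le (hBt.mono hsub)
    have : B t ∈ Icc (B u) (B v) := by rw [hBu, hBv]; exact ⟨hmin.le, hmax.le⟩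
    obtain ⟨t', ht', hBt'⟩ := hiv this
    have ht'u : t' < u := lt_of_le_of_ne ht'.2 (fun h => by
      rw [h, hBu] at hBt'; exact hmin.ne hBt')
    have ht'0 : 0 ≤ t' := hvmem.1.1.trans ht'.1
    have ht't : t' < t := ht'u.trans hult
    have hsub' : Icc 0 t' ⊆ Icc 0 t := Icc_subset_Icc le_rfl ht't.le
    have hne' : (B '' Icc 0 t').Nonempty := (nonempty_Icc.2 ht'0).image B
    have hK' : IsCompact (B '' Icc 0 t') :=
      isCompact_Icc.image_of_continuousOn (hBt.mono hsub')
    refine ⟨t', ht'0, ht't, hBt', Or.inr ⟨?_, ?_⟩⟩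
    · refine le_antisymm (csSup_le_csSup hbddA hne' (image_mono (f := B) hsub')) ?_
      exact le_csSup (hbddA.mono (image_mono (f := B) hsub'))
        ⟨v, ⟨hvmem.1.1, ht'.1⟩, hBv⟩
    · obtain ⟨s, hs, hsInf⟩ := hK'.sInf_mem hne'
      rw [← hsInf]
      refine lt_of_le_of_ne (csInf_le hbddB (mem_image_of_mem B (hsub' hs))) ?_
      intro h
      exact absurd (hule s ⟨hsub' hs, h.symm⟩) (not_le.2 (hs.2.trans_lt ht'u))
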